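/- arXiv:1703.06403 — 5 statements merged into one kernel-verified Lean document; each statement's English description precedes it below -/
import Mathlib

section
/- Let K be a convex body in ℝⁿ and let λ ∈ [0,1]. Define C ⊂ ℝ × ℝⁿ as the convex hull of ({0} × (1−λ)K) ∪ ({1} × (−λK)). Then the (n+1)-dimensional Lebesgue volume of C satisfies vol_{n+1}(C) ≤ vol_n(K)/(n+1). -/
/-!
For `z = (t, x)` let `S z = (1 - t)(1 - λ)K ∩ (x + tλK)`. A point `z` with `t ∈ [0, 1]` lies in `C`
exactly when `S z` is nonempty, and by Fubini `∫ vol S(t, x) dx = vol((1 - t)(1 - λ)K) vol(tλK)`,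
so `∫_C vol S = (λ(1 - λ))ⁿ vol(K)² ∫₀¹ (1 - t)ⁿ tⁿ dt`. On the other hand `z ↦ S z` is concave
for Minkowski combinations, hence along the segment from `z₀ = (1 - λ, 0)`, where
`S z₀ = λ(1 - λ)K`, to any point of `C` we get `vol S ≥ (1 - r)ⁿ vol S(z₀)`. Averaging this over
the homothetic copies `z₀ + r(C - z₀)` with weight `n(1 - r)ⁿ⁻¹` gives
`∫_C vol S ≥ (n + 1) vol(C) (λ(1 - λ))ⁿ vol(K) ∫₀¹ (1 - t)ⁿ tⁿ dt` (a Beta-integral identity), and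
comparing the two bounds yields the claim. For `λ ∈ {0, 1}` the body `C` is a cone over `±K`.
-/

open MeasureTheory Set Pointwise Module
open scoped ENNReal

section Convex

variable {E : Type*} [AddCommGroup E] [Module ℝ E] {A B C : Set E} {z₀ : E}

theorem Convex.smul_add_smul_mem_smul (hA : Convex ℝ A) {p q r : ℝ} (hp : 0 ≤ p) (hq : 0 ≤ q)
    (hr : r ∈ Icc (0 : ℝ) 1) {u v : E} (hu : u ∈ p • A) (hv : v ∈ q • A) :
    (1 - r) • u + r • v ∈ ((1 - r) * p + r * q) • A := by
  rw [hA.add_smul (mul_nonneg (sub_nonneg.2 hr.2) hp) (mul_nonneg hr.1 hq), mul_smul, mul_smul]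
  exact add_mem_add (smul_mem_smul_set hu) (smul_mem_smul_set hv)

theorem mem_convexHull_zero_prod_union_one_prod (hA : Convex ℝ A) (hB : Convex ℝ B)
    (hA₀ : A.Nonempty) (hB₀ : B.Nonempty) {t : ℝ} {x : E} :
    (t, x) ∈ convexHull ℝ (({0} : Set ℝ) ×ˢ A ∪ ({1} : Set ℝ) ×ˢ B) ↔
      t ∈ Icc (0 : ℝ) 1 ∧ x ∈ (1 - t) • A + t • B := by
  rw [((convex_singleton _).prod hA).convexHull_union ((convex_singleton _).prod hB)
    ((singleton_nonempty _).prod hA₀) ((singleton_nonempty _).prod hB₀), mem_convexJoin]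
  constructor
  · rintro ⟨⟨_, a⟩, ⟨rfl, ha⟩, ⟨_, b⟩, ⟨rfl, hb⟩, α, β, hα, hβ, hαβ, hseg⟩
    obtain ⟨rfl, rfl⟩ := Prod.ext_iff.1 hseg.symm
    obtain rfl : α = 1 - β := by linarith
    exact ⟨⟨by simpa using hβ, by simpa using hα⟩, by
      simpa using add_mem_add (smul_mem_smul_set (a := 1 - β) ha) (smul_mem_smul_set (a := β) hb)⟩
  · rintro ⟨ht, _, ⟨a, ha, rfl⟩, _, ⟨b, hb, rfl⟩, rfl⟩
    refine ⟨(0, a), ⟨rfl, ha⟩, (1, b), ⟨rfl, hb⟩, ?_⟩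
    rw [segment_eq_image]
    exact ⟨t, ht, by ext <;> simp⟩

theorem isCompact_convexHull_zero_prod_union_one_prod [TopologicalSpace E]
    [IsTopologicalAddGroup E] [ContinuousSMul ℝ E] (hA : Convex ℝ A) (hB : Convex ℝ B)
    (hA₀ : A.Nonempty) (hB₀ : B.Nonempty) (hAc : IsCompact A) (hBc : IsCompact B) :
    IsCompact (convexHull ℝ (({0} : Set ℝ) ×ˢ A ∪ ({1} : Set ℝ) ×ˢ B)) := by
  have : convexHull ℝ (({0} : Set ℝ) ×ˢ A ∪ ({1} : Set ℝ) ×ˢ B) =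
      (fun q : ℝ × E × E => (q.1, (1 - q.1) • q.2.1 + q.1 • q.2.2)) '' Icc 0 1 ×ˢ A ×ˢ B := by
    ext ⟨t, x⟩
    rw [mem_convexHull_zero_prod_union_one_prod hA hB hA₀ hB₀]
    constructor
    · rintro ⟨ht, _, ⟨a, ha, rfl⟩, _, ⟨b, hb, rfl⟩, rfl⟩
      exact ⟨(t, a, b), ⟨ht, ha, hb⟩, rfl⟩
    · rintro ⟨⟨t, a, b⟩, ⟨ht, ha, hb⟩, hq⟩
      obtain ⟨rfl, rfl⟩ := Prod.ext_iff.1 hq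
      exact ⟨ht, add_mem_add (smul_mem_smul_set ha) (smul_mem_smul_set hb)⟩
  rw [this]
  exact (isCompact_Icc.prod (hAc.prod hBc)).image (by fun_prop)

def overlapSet (A B : Set E) (z : ℝ × E) : Set E := (1 - z.1) • A ∩ (z.2 +ᵥ z.1 • B)

theorem overlapSet_nonempty_iff {t : ℝ} {x : E} :
    (overlapSet A B (t, x)).Nonempty ↔ x ∈ (1 - t) • A + t • -B := by
  rw [smul_set_neg]
  constructor
  · rintro ⟨u, hu, v, hv, rfl⟩
    exact ⟨x + v, hu, -v, neg_mem_neg.2 hv, by simp⟩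
  · rintro ⟨u, hu, _, hv, rfl⟩
    exact ⟨u, hu, _, hv, by simp⟩

theorem mem_convexHull_iff_overlapSet_nonempty (hA : Convex ℝ A) (hB : Convex ℝ B)
    (hA₀ : A.Nonempty) (hB₀ : B.Nonempty) {z : ℝ × E} :
    z ∈ convexHull ℝ (({0} : Set ℝ) ×ˢ A ∪ ({1} : Set ℝ) ×ˢ (-B)) ↔
      z.1 ∈ Icc (0 : ℝ) 1 ∧ (overlapSet A B z).Nonempty := by
  rw [overlapSet_nonempty_iff, ← mem_convexHull_zero_prod_union_one_prod hA hB.neg hA₀ hB₀.neg]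

theorem smul_overlapSet_add_smul_overlapSet_subset (hA : Convex ℝ A) (hB : Convex ℝ B)
    {z w : ℝ × E} (hz : z.1 ∈ Icc (0 : ℝ) 1) (hw : w.1 ∈ Icc (0 : ℝ) 1) {r : ℝ}
    (hr : r ∈ Icc (0 : ℝ) 1) :
    (1 - r) • overlapSet A B z + r • overlapSet A B w ⊆ overlapSet A B ((1 - r) • z + r • w) := by
  rintro _ ⟨_, ⟨u, ⟨huA, u', hu'B, rfl⟩, rfl⟩, _, ⟨v, ⟨hvA, v', hv'B, rfl⟩, rfl⟩, rfl⟩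
  constructor
  · convert hA.smul_add_smul_mem_smul (sub_nonneg.2 hz.2) (sub_nonneg.2 hw.2) hr huA hvA using 2
    simp only [Prod.fst_add, Prod.smul_fst, smul_eq_mul]
    ring
  · refine ⟨(1 - r) • u' + r • v', hB.smul_add_smul_mem_smul hz.1 hw.1 hr hu'B hv'B, ?_⟩
    simp only [vadd_eq_add, Prod.snd_add, Prod.smul_snd, smul_add]
    abel

def homothetyCone (z₀ : E) (C : Set E) : Set (ℝ × E) :=
  (fun q : ℝ × E => (q.1, (1 - q.1) • z₀ + q.1 • q.2)) '' Icc 0 1 ×ˢ C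

theorem mem_homothetyCone {r : ℝ} {z : E} :
    (r, z) ∈ homothetyCone z₀ C ↔ r ∈ Icc (0 : ℝ) 1 ∧ ∃ w ∈ C, (1 - r) • z₀ + r • w = z := by
  simp [homothetyCone, Prod.ext_iff, and_assoc]

theorem IsCompact.homothetyCone [TopologicalSpace E] [IsTopologicalAddGroup E]
    [ContinuousSMul ℝ E] (hC : IsCompact C) : IsCompact (homothetyCone z₀ C) :=
  (isCompact_Icc.prod hC).image (by fun_prop)

theorem Convex.mem_of_mem_homothetyCone (hCc : Convex ℝ C) (hz₀ : z₀ ∈ C) {r : ℝ} {z : E}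
    (h : (r, z) ∈ homothetyCone z₀ C) : z ∈ C := by
  obtain ⟨hr, w, hw, rfl⟩ := mem_homothetyCone.1 h
  exact hCc hz₀ hw (sub_nonneg.2 hr.2) hr.1 (by ring)

theorem preimage_mk_homothetyCone {r : ℝ} (hr : r ∈ Icc (0 : ℝ) 1) :
    Prod.mk r ⁻¹' homothetyCone z₀ C = (1 - r) • z₀ +ᵥ r • C := by
  ext z
  simp [mem_homothetyCone, hr, mem_vadd_set, mem_smul_set]

end Convex

theorem lintegral_Icc_ofReal_eq_ofReal_integral {a b : ℝ} (hab : a ≤ b) {f : ℝ → ℝ}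
    (hf : Continuous f) (hf₀ : ∀ x ∈ Icc a b, 0 ≤ f x) :
    ∫⁻ t in Icc a b, ENNReal.ofReal (f t) = ENNReal.ofReal (∫ t in a..b, f t) := by
  rw [← Measure.restrict_congr_set Ioc_ae_eq_Icc,
    ← ofReal_integral_eq_lintegral_ofReal (hf.integrableOn_Icc.mono_set Ioc_subset_Icc_self)
      ((ae_restrict_iff' measurableSet_Ioc).2
        (ae_of_all _ fun x hx => hf₀ x (Ioc_subset_Icc_self hx))),
    intervalIntegral.integral_of_le hab]

theorem lintegral_Icc_ofReal_pow (d : ℕ) :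
    ∫⁻ t in Icc (0 : ℝ) 1, ENNReal.ofReal (t ^ d) = ((d : ℝ≥0∞) + 1)⁻¹ := by
  rw [lintegral_Icc_ofReal_eq_ofReal_integral zero_le_one (by fun_prop)
      fun t ht => pow_nonneg ht.1 d,
    integral_pow, ENNReal.ofReal_div_of_pos (by positivity)]
  simpa using ENNReal.ofReal_natCast (d + 1)

theorem lintegral_Icc_ofReal_one_sub_pow (d : ℕ) :
    ∫⁻ t in Icc (0 : ℝ) 1, ENNReal.ofReal ((1 - t) ^ d) = ((d : ℝ≥0∞) + 1)⁻¹ := by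
  rw [lintegral_Icc_ofReal_eq_ofReal_integral zero_le_one (by fun_prop)
      fun t ht => pow_nonneg (sub_nonneg.2 ht.2) d,
    intervalIntegral.integral_comp_sub_left (fun t => t ^ d), sub_self, sub_zero,
    ← lintegral_Icc_ofReal_eq_ofReal_integral zero_le_one (by fun_prop)
      fun t ht => pow_nonneg ht.1 d,
    lintegral_Icc_ofReal_pow]

theorem lintegral_Icc_ofReal_mul_one_sub_pow_le (p : ℕ) {ρ : ℝ} (hρ : ρ ≤ 1) :
    ∫⁻ r in Icc ρ 1, ENNReal.ofReal (p * (1 - r) ^ (p - 1)) ≤ ENNReal.ofReal ((1 - ρ) ^ p) := by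
  have hderiv : ∀ r ∈ uIcc ρ 1,
      HasDerivAt (fun u : ℝ => -(1 - u) ^ p) (p * (1 - r) ^ (p - 1)) r := fun r _ => by
    simpa using (((hasDerivAt_id r).const_sub 1).fun_pow p).fun_neg
  have hcont : Continuous fun r : ℝ => p * (1 - r) ^ (p - 1) := by fun_prop
  rw [lintegral_Icc_ofReal_eq_ofReal_integral hρ hcont
      fun r hr => mul_nonneg p.cast_nonneg (pow_nonneg (sub_nonneg.2 hr.2) _),
    intervalIntegral.integral_eq_sub_of_hasDerivAt hderiv (hcont.intervalIntegrable _ _)]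
  gcongr
  simp

theorem lintegral_indicator_mul_le_of_forall_mem {R : Set ℝ} (hR : R ⊆ Icc 0 1) (p : ℕ)
    {M a : ℝ≥0∞} (hM : M ≠ ∞) (h : ∀ r ∈ R, ENNReal.ofReal ((1 - r) ^ p) * M ≤ a) :
    (∫⁻ r, R.indicator (fun r => ENNReal.ofReal (p * (1 - r) ^ (p - 1))) r) * M ≤ a := by
  rcases R.eq_empty_or_nonempty with rfl | ⟨r₀, hr₀⟩
  · simp
  have hbdd : BddBelow R := ⟨0, fun r hr => (hR hr).1⟩
  have hρ : ENNReal.ofReal ((1 - sInf R) ^ p) * M ≤ a := by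
    have hcl : IsClosed {r : ℝ | ENNReal.ofReal ((1 - r) ^ p) * M ≤ a} :=
      isClosed_le ((ENNReal.continuous_mul_const hM).comp
        (ENNReal.continuous_ofReal.comp (by fun_prop))) continuous_const
    exact hcl.closure_subset_iff.2 h (csInf_mem_closure ⟨r₀, hr₀⟩ hbdd)
  calc (∫⁻ r, R.indicator (fun r => ENNReal.ofReal (p * (1 - r) ^ (p - 1))) r) * M
      ≤ (∫⁻ r in Icc (sInf R) 1, ENNReal.ofReal (p * (1 - r) ^ (p - 1))) * M := by
        rw [← lintegral_indicator measurableSet_Icc]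
        gcongr
        exact fun r hr => ⟨csInf_le hbdd hr, (hR hr).2⟩
    _ ≤ ENNReal.ofReal ((1 - sInf R) ^ p) * M := by
        gcongr
        exact lintegral_Icc_ofReal_mul_one_sub_pow_le p ((csInf_le hbdd hr₀).trans (hR hr₀).2)
    _ ≤ a := hρ

theorem integral_mul_one_sub_pow_mul_pow_succ {p : ℕ} (hp : p ≠ 0) (q : ℕ) :
    ∫ r in (0 : ℝ)..1, p * (1 - r) ^ (p - 1) * r ^ (q + 1) =
      (q + 1) * ∫ r in (0 : ℝ)..1, (1 - r) ^ p * r ^ q := by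
  have hderiv : ∀ r ∈ uIcc (0 : ℝ) 1, HasDerivAt (fun u : ℝ => u ^ (q + 1) * (1 - u) ^ p)
      ((q + 1) * ((1 - r) ^ p * r ^ q) - p * (1 - r) ^ (p - 1) * r ^ (q + 1)) r := by
    intro r _
    refine ((hasDerivAt_pow (q + 1) r).mul
      (((hasDerivAt_id r).const_sub 1).fun_pow p)).congr_deriv ?_
    simp only [Nat.add_sub_cancel, id, Nat.cast_add, Nat.cast_one]
    ring
  have hcont₁ : Continuous fun r : ℝ => (q + 1) * ((1 - r) ^ p * r ^ q) := by fun_prop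
  have hcont₂ : Continuous fun r : ℝ => p * (1 - r) ^ (p - 1) * r ^ (q + 1) := by fun_prop
  have h := intervalIntegral.integral_eq_sub_of_hasDerivAt hderiv
    ((hcont₁.sub hcont₂).intervalIntegrable _ _)
  rw [intervalIntegral.integral_sub (hcont₁.intervalIntegrable _ _)
    (hcont₂.intervalIntegrable _ _), intervalIntegral.integral_const_mul] at h
  simp [hp] at h
  linarith

theorem lintegral_measure_inter_vadd {G : Type*} [AddCommGroup G] [MeasurableSpace G]
    [MeasurableAdd₂ G] [MeasurableNeg G] (μ : Measure G) [SFinite μ] [μ.IsAddLeftInvariant]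
    [μ.IsNegInvariant] {S T : Set G} (hS : MeasurableSet S) (hT : MeasurableSet T) :
    ∫⁻ x, μ (S ∩ (x +ᵥ T)) ∂μ = μ S * μ T := by
  have hslice : ∀ x, μ (S ∩ (x +ᵥ T)) = ∫⁻ y, S.indicator 1 y * T.indicator 1 (y - x) ∂μ := by
    intro x
    have : S ∩ (x +ᵥ T) = S ∩ (fun y => y - x) ⁻¹' T := by
      ext y
      simp [mem_vadd_set_iff_neg_vadd_mem, neg_add_eq_sub]
    rw [this, ← lintegral_indicator_one (hS.inter (measurable_sub_const x hT))]
    refine lintegral_congr fun y => ?_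
    rw [inter_indicator_one]
    rfl
  have hmeas : Measurable fun q : G × G =>
      S.indicator (1 : G → ℝ≥0∞) q.2 * T.indicator 1 (q.2 - q.1) :=
    ((measurable_one.indicator hS).comp measurable_snd).mul
      ((measurable_one.indicator hT).comp (measurable_snd.sub measurable_fst))
  calc ∫⁻ x, μ (S ∩ (x +ᵥ T)) ∂μ
      = ∫⁻ y, ∫⁻ x, S.indicator 1 y * T.indicator 1 (y - x) ∂μ ∂μ := by
        simp_rw [hslice]
        exact lintegral_lintegral_swap hmeas.aemeasurable
    _ = ∫⁻ y, S.indicator 1 y * μ T ∂μ := by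
        refine lintegral_congr fun y => ?_
        rw [lintegral_const_mul' _ _ (by by_cases h : y ∈ S <;> simp [h]),
          (Measure.measurePreserving_sub_left μ y).lintegral_comp (measurable_one.indicator hT),
          lintegral_indicator_one hT]
    _ = μ S * μ T := by
        rw [lintegral_mul_const _ (measurable_one.indicator hS), lintegral_indicator_one hS]

section Cone

variable {V : Type*} [NormedAddCommGroup V] [NormedSpace ℝ V] {C : Set V} {z₀ : V}
  [FiniteDimensional ℝ V] [MeasurableSpace V] [BorelSpace V] (ν : Measure V)
  [ν.IsAddHaarMeasure]

theorem lintegral_indicator_homothetyCone (hC : IsCompact C) (f : ℝ → ℝ≥0∞) (r : ℝ) :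
    ∫⁻ z, (homothetyCone z₀ C).indicator (fun q => f q.1) (r, z) ∂ν =
      (Icc 0 1).indicator (fun r => f r * (ENNReal.ofReal (r ^ finrank ℝ V) * ν C)) r := by
  by_cases hr : r ∈ Icc (0 : ℝ) 1
  · have : (fun z => (homothetyCone z₀ C).indicator (fun q => f q.1) (r, z)) =
        (Prod.mk r ⁻¹' homothetyCone z₀ C).indicator fun _ => f r := rfl
    rw [this, lintegral_indicator_const (measurable_prodMk_left
      hC.homothetyCone.isClosed.measurableSet), preimage_mk_homothetyCone hr, measure_vadd,
      Measure.addHaar_smul, indicator_of_mem hr, abs_of_nonneg (pow_nonneg hr.1 _)]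
  · have h₀ : ∀ z, (homothetyCone z₀ C).indicator (fun q => f q.1) (r, z) = 0 := fun z =>
      indicator_of_notMem (fun h => hr (mem_homothetyCone.1 h).1) _
    simp [h₀, indicator_of_notMem hr]

/-- For fixed `z` the admissible `r` (those with `(r, z)` in the cone) lie in `[ρ, 1]`, where the
weight integrates to at most `(1 - ρ)ᵖ`; integrating in `z` first gives `rᵈ ν(C)` for each `r`. -/
theorem ofReal_integral_mul_measure_mul_le_setLIntegral (hC : IsCompact C) (hCc : Convex ℝ C)
    (hz₀ : z₀ ∈ C) (p : ℕ) {g : V → ℝ≥0∞} {M : ℝ≥0∞} (hM : M ≠ ∞)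
    (hg : ∀ r ∈ Icc (0 : ℝ) 1, ∀ w ∈ C,
      ENNReal.ofReal ((1 - r) ^ p) * M ≤ g ((1 - r) • z₀ + r • w)) :
    ENNReal.ofReal (∫ r in (0 : ℝ)..1, p * (1 - r) ^ (p - 1) * r ^ finrank ℝ V) * ν C * M ≤
      ∫⁻ z in C, g z ∂ν := by
  set F : ℝ × V → ℝ≥0∞ :=
    (homothetyCone z₀ C).indicator fun q => ENNReal.ofReal (p * (1 - q.1) ^ (p - 1))
  have hF : Measurable F := (ENNReal.measurable_ofReal.comp (by fun_prop)).indicator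
    hC.homothetyCone.isClosed.measurableSet
  calc ENNReal.ofReal (∫ r in (0 : ℝ)..1, p * (1 - r) ^ (p - 1) * r ^ finrank ℝ V) * ν C * M
      = (∫⁻ r, ∫⁻ z, F (r, z) ∂ν) * M := by
        have hrow : ∀ r, ∫⁻ z, F (r, z) ∂ν = (Icc 0 1).indicator (fun r =>
            ENNReal.ofReal (p * (1 - r) ^ (p - 1)) * (ENNReal.ofReal (r ^ finrank ℝ V) * ν C)) r :=
          lintegral_indicator_homothetyCone (z₀ := z₀) ν hC
            (fun r => ENNReal.ofReal (p * (1 - r) ^ (p - 1)))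
        simp_rw [lintegral_congr hrow, ← mul_assoc]
        rw [lintegral_indicator measurableSet_Icc, lintegral_mul_const _ (by fun_prop)]
        congr 2
        rw [← lintegral_Icc_ofReal_eq_ofReal_integral zero_le_one (by fun_prop)
            fun r hr => mul_nonneg (mul_nonneg p.cast_nonneg (pow_nonneg (sub_nonneg.2 hr.2) _))
              (pow_nonneg hr.1 _)]
        refine setLIntegral_congr_fun measurableSet_Icc fun r hr => ?_
        rw [ENNReal.ofReal_mul (mul_nonneg p.cast_nonneg (pow_nonneg (sub_nonneg.2 hr.2) _))]
    _ = ∫⁻ z in C, (∫⁻ r, F (r, z)) * M ∂ν := by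
        rw [lintegral_lintegral_swap (f := fun r z => F (r, z)) hF.aemeasurable,
          ← lintegral_mul_const' _ _ hM]
        refine (setLIntegral_eq_of_support_subset fun z hz => ?_).symm
        by_contra hzC
        have hF₀ : ∀ r, F (r, z) = 0 := fun r =>
          indicator_of_notMem (fun h => hzC (hCc.mem_of_mem_homothetyCone hz₀ h)) _
        simp [hF₀] at hz
    _ ≤ ∫⁻ z in C, g z ∂ν := by
        refine setLIntegral_mono' hC.isClosed.measurableSet fun z _ => ?_
        refine lintegral_indicator_mul_le_of_forall_mem
          (R := {r | (r, z) ∈ homothetyCone z₀ C}) (fun r hr => (mem_homothetyCone.1 hr).1) p hM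
          fun r hrz => ?_
        obtain ⟨hr, w, hw, rfl⟩ := mem_homothetyCone.1 hrz
        exact hg r hr w hw

end Cone

theorem prod_measure_convexHull_zero_prod_union_one_prod_eq_lintegral {E : Type*}
    [NormedAddCommGroup E] [NormedSpace ℝ E] [MeasurableSpace E] [BorelSpace E]
    (μ : Measure E) [SFinite μ] {A B : Set E} (hAc : IsCompact A) (hBc : IsCompact B)
    (hA : Convex ℝ A) (hB : Convex ℝ B) (hA₀ : A.Nonempty) (hB₀ : B.Nonempty) :
    (volume.prod μ) (convexHull ℝ (({0} : Set ℝ) ×ˢ A ∪ ({1} : Set ℝ) ×ˢ B)) =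
      ∫⁻ t in Icc (0 : ℝ) 1, μ ((1 - t) • A + t • B) := by
  rw [Measure.prod_apply (isCompact_convexHull_zero_prod_union_one_prod hA hB hA₀ hB₀ hAc
    hBc).isClosed.measurableSet, ← lintegral_indicator measurableSet_Icc]
  refine lintegral_congr fun t => ?_
  by_cases ht : t ∈ Icc (0 : ℝ) 1
  · rw [indicator_of_mem ht]
    congr 1
    ext x
    simp [mem_convexHull_zero_prod_union_one_prod hA hB hA₀ hB₀, ht]
  · rw [indicator_of_notMem ht]
    convert measure_empty (μ := μ)
    ext x
    simp [mem_convexHull_zero_prod_union_one_prod hA hB hA₀ hB₀, ht]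

section Haar

variable {E : Type*} [NormedAddCommGroup E] [NormedSpace ℝ E] [FiniteDimensional ℝ E]
  [MeasurableSpace E] [BorelSpace E] {A B : Set E}

theorem prod_measure_convexHull_of_finrank_eq_zero (μ : Measure E) [SFinite μ]
    (hd : finrank ℝ E = 0) (hAc : IsCompact A) (hBc : IsCompact B) (hA : Convex ℝ A)
    (hB : Convex ℝ B) (hA₀ : A.Nonempty) (hB₀ : B.Nonempty) :
    (volume.prod μ) (convexHull ℝ (({0} : Set ℝ) ×ˢ A ∪ ({1} : Set ℝ) ×ˢ B)) = μ A := by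
  have : Subsingleton E := (finrank_eq_zero_iff_of_free ℝ E).1 hd
  have hslice : ∀ t : ℝ, (1 - t) • A + t • B = A := fun t => by
    rw [(hA₀.smul_set.add hB₀.smul_set).eq_univ, hA₀.eq_univ]
  simp [prod_measure_convexHull_zero_prod_union_one_prod_eq_lintegral μ hAc hBc hA hB hA₀ hB₀,
    hslice]

variable (μ : Measure E) [μ.IsAddHaarMeasure]

theorem prod_measure_convexHull_zero_prod_union_one_zero (hAc : IsCompact A) (hA : Convex ℝ A)
    (hA₀ : A.Nonempty) :
    (volume.prod μ) (convexHull ℝ (({0} : Set ℝ) ×ˢ A ∪ ({1} : Set ℝ) ×ˢ (0 : Set E))) =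
      μ A / (finrank ℝ E + 1) := by
  rw [prod_measure_convexHull_zero_prod_union_one_prod_eq_lintegral μ (B := 0) hAc
    isCompact_singleton hA (convex_singleton 0) hA₀ (singleton_nonempty 0)]
  calc ∫⁻ t in Icc (0 : ℝ) 1, μ ((1 - t) • A + t • (0 : Set E))
      = ∫⁻ t in Icc (0 : ℝ) 1, ENNReal.ofReal ((1 - t) ^ finrank ℝ E) * μ A :=
        setLIntegral_congr_fun measurableSet_Icc fun t ht => by
          rw [smul_zero, add_zero, Measure.addHaar_smul,
            abs_of_nonneg (pow_nonneg (sub_nonneg.2 ht.2) _)]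
    _ = μ A / (finrank ℝ E + 1) := by
        rw [lintegral_mul_const _ (by fun_prop), lintegral_Icc_ofReal_one_sub_pow,
          div_eq_mul_inv, mul_comm]

theorem prod_measure_convexHull_zero_zero_union_one_prod (hBc : IsCompact B) (hB : Convex ℝ B)
    (hB₀ : B.Nonempty) :
    (volume.prod μ) (convexHull ℝ (({0} : Set ℝ) ×ˢ (0 : Set E) ∪ ({1} : Set ℝ) ×ˢ B)) =
      μ B / (finrank ℝ E + 1) := by
  rw [prod_measure_convexHull_zero_prod_union_one_prod_eq_lintegral μ (A := 0)
    isCompact_singleton hBc (convex_singleton 0) hB (singleton_nonempty 0) hB₀]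
  calc ∫⁻ t in Icc (0 : ℝ) 1, μ ((1 - t) • (0 : Set E) + t • B)
      = ∫⁻ t in Icc (0 : ℝ) 1, ENNReal.ofReal (t ^ finrank ℝ E) * μ B :=
        setLIntegral_congr_fun measurableSet_Icc fun t ht => by
          rw [smul_zero, zero_add, Measure.addHaar_smul, abs_of_nonneg (pow_nonneg ht.1 _)]
    _ = μ B / (finrank ℝ E + 1) := by
        rw [lintegral_mul_const _ (by fun_prop), lintegral_Icc_ofReal_pow, div_eq_mul_inv,
          mul_comm]

theorem lintegral_measure_overlapSet (hA : IsCompact A) (hB : IsCompact B) {t : ℝ}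
    (ht : t ∈ Icc (0 : ℝ) 1) :
    ∫⁻ x, μ (overlapSet A B (t, x)) ∂μ =
      ENNReal.ofReal ((1 - t) ^ finrank ℝ E * t ^ finrank ℝ E) * (μ A * μ B) := by
  simp only [overlapSet]
  rw [lintegral_measure_inter_vadd μ (hA.smul _).isClosed.measurableSet
    (hB.smul _).isClosed.measurableSet, Measure.addHaar_smul, Measure.addHaar_smul,
    abs_of_nonneg (pow_nonneg (sub_nonneg.2 ht.2) _), abs_of_nonneg (pow_nonneg ht.1 _),
    ENNReal.ofReal_mul (pow_nonneg (sub_nonneg.2 ht.2) _)]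
  ring

theorem ofReal_pow_mul_measure_overlapSet_le (hA : Convex ℝ A) (hB : Convex ℝ B)
    {z w : ℝ × E} (hz : z.1 ∈ Icc (0 : ℝ) 1) (hw : w.1 ∈ Icc (0 : ℝ) 1)
    (hw₀ : (overlapSet A B w).Nonempty) {r : ℝ} (hr : r ∈ Icc (0 : ℝ) 1) :
    ENNReal.ofReal ((1 - r) ^ finrank ℝ E) * μ (overlapSet A B z) ≤
      μ (overlapSet A B ((1 - r) • z + r • w)) := by
  obtain ⟨e, he⟩ := hw₀
  calc ENNReal.ofReal ((1 - r) ^ finrank ℝ E) * μ (overlapSet A B z)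
      = μ (r • e +ᵥ (1 - r) • overlapSet A B z) := by
        rw [measure_vadd, Measure.addHaar_smul, abs_of_nonneg (pow_nonneg (sub_nonneg.2 hr.2) _)]
    _ ≤ μ (overlapSet A B ((1 - r) • z + r • w)) := by
        refine measure_mono (Subset.trans ?_
          (smul_overlapSet_add_smul_overlapSet_subset hA hB hz hw hr))
        rintro _ ⟨u, hu, rfl⟩
        exact ⟨u, hu, r • e, smul_mem_smul_set he, add_comm _ _⟩

theorem setLIntegral_measure_overlapSet_le (hA : IsCompact A) (hB : IsCompact B)
    {C : Set (ℝ × E)} (hC : C ⊆ Icc 0 1 ×ˢ univ) :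
    ∫⁻ z in C, μ (overlapSet A B z) ∂(volume.prod μ) ≤
      ENNReal.ofReal (∫ t in (0 : ℝ)..1, (1 - t) ^ finrank ℝ E * t ^ finrank ℝ E) *
        (μ A * μ B) := by
  calc ∫⁻ z in C, μ (overlapSet A B z) ∂(volume.prod μ)
      ≤ ∫⁻ z in Icc 0 1 ×ˢ univ, μ (overlapSet A B z) ∂(volume.prod μ) := lintegral_mono_set hC
    _ ≤ ∫⁻ t in Icc 0 1, ∫⁻ x, μ (overlapSet A B (t, x)) ∂μ := by
        rw [← Measure.prod_restrict, Measure.restrict_univ]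
        exact lintegral_prod_le _
    _ = ∫⁻ t in Icc 0 1,
          ENNReal.ofReal ((1 - t) ^ finrank ℝ E * t ^ finrank ℝ E) * (μ A * μ B) :=
        setLIntegral_congr_fun measurableSet_Icc fun t ht => lintegral_measure_overlapSet μ hA hB ht
    _ = _ := by
        rw [lintegral_mul_const _ (by fun_prop),
          lintegral_Icc_ofReal_eq_ofReal_integral zero_le_one (by fun_prop)
            fun t ht => mul_nonneg (pow_nonneg (sub_nonneg.2 ht.2) _) (pow_nonneg ht.1 _)]

theorem prod_measure_convexHull_mul_measure_overlapSet_le (hAc : IsCompact A)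
    (hBc : IsCompact B) (hA : Convex ℝ A) (hB : Convex ℝ B) (hA₀ : A.Nonempty)
    (hB₀ : B.Nonempty) (hd : finrank ℝ E ≠ 0) {z₀ : ℝ × E}
    (hz₀ : z₀ ∈ convexHull ℝ (({0} : Set ℝ) ×ˢ A ∪ ({1} : Set ℝ) ×ˢ (-B))) :
    (volume.prod μ) (convexHull ℝ (({0} : Set ℝ) ×ˢ A ∪ ({1} : Set ℝ) ×ˢ (-B))) *
        (finrank ℝ E + 1) * μ (overlapSet A B z₀) ≤ μ A * μ B := by
  set C := convexHull ℝ (({0} : Set ℝ) ×ˢ A ∪ ({1} : Set ℝ) ×ˢ (-B))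
  set d := finrank ℝ E
  set I := ∫ t in (0 : ℝ)..1, (1 - t) ^ d * t ^ d
  have hmem : ∀ {z}, z ∈ C → z.1 ∈ Icc (0 : ℝ) 1 ∧ (overlapSet A B z).Nonempty := fun hz =>
    (mem_convexHull_iff_overlapSet_nonempty hA hB hA₀ hB₀).1 hz
  have hI : 0 < I := intervalIntegral.intervalIntegral_pos_of_pos_on
    (Continuous.intervalIntegrable (by fun_prop) _ _)
    (fun t ht => mul_pos (pow_pos (sub_pos.2 ht.2) _) (pow_pos ht.1 _)) zero_lt_one
  have hM : μ (overlapSet A B z₀) ≠ ∞ :=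
    measure_ne_top_of_subset inter_subset_left (hAc.smul _).measure_lt_top.ne
  have hlow := ofReal_integral_mul_measure_mul_le_setLIntegral (volume.prod μ)
    (isCompact_convexHull_zero_prod_union_one_prod hA hB.neg hA₀ hB₀.neg hAc hBc.neg)
    (convex_convexHull ℝ _) hz₀ d hM (g := fun z => μ (overlapSet A B z))
    fun r hr w hw => ofReal_pow_mul_measure_overlapSet_le μ hA hB (hmem hz₀).1 (hmem hw).1
      (hmem hw).2 hr
  have hup := setLIntegral_measure_overlapSet_le μ hAc hBc (C := C)
    fun z hz => ⟨(hmem hz).1, trivial⟩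
  rw [finrank_prod, finrank_self, add_comm 1 d, integral_mul_one_sub_pow_mul_pow_succ hd,
    ENNReal.ofReal_mul (by positivity)] at hlow
  have hcast : ENNReal.ofReal ((d : ℝ) + 1) = d + 1 := by
    exact_mod_cast ENNReal.ofReal_natCast (d + 1)
  refine (ENNReal.mul_le_mul_iff_right (ENNReal.ofReal_pos.2 hI).ne' ENNReal.ofReal_ne_top).1 ?_
  calc ENNReal.ofReal I * ((volume.prod μ) C * (d + 1) * μ (overlapSet A B z₀))
      = ENNReal.ofReal ((d : ℝ) + 1) * ENNReal.ofReal I * (volume.prod μ) C *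
          μ (overlapSet A B z₀) := by
        rw [hcast]
        ring
    _ ≤ ENNReal.ofReal I * (μ A * μ B) := hlow.trans hup

end Haar

section Godbersen

variable {E : Type*} [NormedAddCommGroup E] [NormedSpace ℝ E] [FiniteDimensional ℝ E]
  [MeasurableSpace E] [BorelSpace E] (μ : Measure E) [μ.IsAddHaarMeasure] {K : Set E}

theorem prod_measure_godbersen_le_of_mem_Ioo (hKc : IsCompact K) (hK : Convex ℝ K)
    (hK_int : (interior K).Nonempty) {lam : ℝ} (hlam : lam ∈ Ioo (0 : ℝ) 1)
    (hd : finrank ℝ E ≠ 0) :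
    (volume.prod μ)
        (convexHull ℝ (({0} : Set ℝ) ×ˢ ((1 - lam) • K) ∪ ({1} : Set ℝ) ×ˢ (-(lam • K)))) ≤
      μ K / (finrank ℝ E + 1) := by
  have hK₀ : K.Nonempty := hK_int.mono interior_subset
  set d := finrank ℝ E
  have hS : overlapSet ((1 - lam) • K) (lam • K) (1 - lam, 0) = (lam * (1 - lam)) • K := by
    simp only [overlapSet, sub_sub_cancel, smul_smul, zero_vadd, mul_comm (1 - lam), inter_self]
  have hz₀ := (mem_convexHull_iff_overlapSet_nonempty (hK.smul _) (hK.smul _) hK₀.smul_set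
    hK₀.smul_set).2 ⟨⟨by linarith [hlam.2], by linarith [hlam.1]⟩, hS ▸ hK₀.smul_set⟩
  have key := prod_measure_convexHull_mul_measure_overlapSet_le μ (hKc.smul _) (hKc.smul _)
    (hK.smul _) (hK.smul _) hK₀.smul_set hK₀.smul_set hd hz₀
  have hpos : 0 < lam * (1 - lam) := mul_pos hlam.1 (sub_pos.2 hlam.2)
  set X := ENNReal.ofReal ((lam * (1 - lam)) ^ d) * μ K
  have hX₀ : X ≠ 0 := mul_ne_zero (by simpa using pow_pos hpos d)
    (Measure.measure_pos_of_nonempty_interior μ hK_int).ne'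
  have hX_top : X ≠ ∞ := ENNReal.mul_ne_top ENNReal.ofReal_ne_top hKc.measure_lt_top.ne
  have hSX : μ ((lam * (1 - lam)) • K) = X := by
    rw [Measure.addHaar_smul, abs_of_nonneg (pow_nonneg hpos.le _)]
  have hAB : μ ((1 - lam) • K) * μ (lam • K) = X * μ K := by
    simp only [X]
    rw [Measure.addHaar_smul, Measure.addHaar_smul,
      abs_of_nonneg (pow_nonneg (sub_pos.2 hlam.2).le _), abs_of_nonneg (pow_nonneg hlam.1.le _),
      mul_pow, ENNReal.ofReal_mul (pow_nonneg hlam.1.le _)]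
    ring
  rw [hS, hSX, hAB] at key
  rw [ENNReal.le_div_iff_mul_le (Or.inl (by simp)) (Or.inl (by simp))]
  exact (ENNReal.mul_le_mul_iff_left hX₀ hX_top).1 (key.trans_eq (mul_comm _ _))

theorem prod_measure_godbersen_le (hKc : IsCompact K) (hK : Convex ℝ K)
    (hK_int : (interior K).Nonempty) {lam : ℝ} (hlam : lam ∈ Icc (0 : ℝ) 1) :
    (volume.prod μ)
        (convexHull ℝ (({0} : Set ℝ) ×ˢ ((1 - lam) • K) ∪ ({1} : Set ℝ) ×ˢ (-(lam • K)))) ≤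
      μ K / (finrank ℝ E + 1) := by
  have hK₀ : K.Nonempty := hK_int.mono interior_subset
  rcases eq_or_ne (finrank ℝ E) 0 with hd | hd
  · rw [prod_measure_convexHull_of_finrank_eq_zero μ hd (hKc.smul _) (hKc.smul _).neg
      (hK.smul _) (hK.smul _).neg hK₀.smul_set hK₀.smul_set.neg, Measure.addHaar_smul, hd]
    simp
  obtain rfl | hlam₀ := hlam.1.eq_or_lt
  · simpa [zero_smul_set hK₀] using
      (prod_measure_convexHull_zero_prod_union_one_zero μ hKc hK hK₀).le
  obtain rfl | hlam₁ := hlam.2.eq_or_lt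
  · simpa [zero_smul_set hK₀] using
      (prod_measure_convexHull_zero_zero_union_one_prod μ hKc.neg hK.neg hK₀.neg).le
  exact prod_measure_godbersen_le_of_mem_Ioo μ hKc hK hK_int ⟨hlam₀, hlam₁⟩ hd

end Godbersen

theorem godbersen_stmt0 (n : ℕ) (K : Set (EuclideanSpace ℝ (Fin n)))
    (hK_compact : IsCompact K) (hK_conv : Convex ℝ K)
    (hK_int : (interior K).Nonempty)
    (lam : ℝ) (hlam : lam ∈ Set.Icc (0:ℝ) 1)
    (C : Set (ℝ × EuclideanSpace ℝ (Fin n)))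
    (hC : C = convexHull ℝ
      (({0} : Set ℝ) ×ˢ ((1 - lam) • K) ∪ ({1} : Set ℝ) ×ˢ (-(lam • K)))) :
    volume C ≤ volume K / (n + 1) := by
  subst hC
  simpa [Measure.volume_eq_prod] using
    prod_measure_godbersen_le volume hK_compact hK_conv hK_int hlam
end

section
/- Let K₁, K₂ be convex bodies in ℝⁿ and let T ⊂ ℝ × ℝⁿ × ℝⁿ be the convex hull of {(0, 0, y) : y ∈ K₂} ∪ {(1, x, −x) : x ∈ K₁}. Then the (2n+1)-dimensional Lebesgue volume of T equals (n! · n! / (2n+1)!) · vol_n(K₁) · vol_n(K₂). -/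
/-!
Every point of `T` lies on a segment from some `(0, 0, y)`, `y ∈ K₂`, to some `(1, x, -x)`,
`x ∈ K₁`, so `T` is the image of `[0, 1] × K₁ × K₂` under `(t, x, y) ↦ (t, t x, (1 - t) y - t x)`.
Its slice at height `t` is the preimage of `t K₁ × (1 - t) K₂` under the volume-preserving shear
`(a, b) ↦ (a, a + b)`, so it has volume `tⁿ (1 - t)ⁿ vol K₁ vol K₂`. Fubini and the Beta integral
`∫₀¹ tⁿ (1 - t)ⁿ dt = n! n! / (2n + 1)!` finish the computation.
-/

open MeasureTheory Set Pointwise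
open scoped ENNReal Nat

theorem integral_pow_mul_one_sub_pow (m k : ℕ) :
    ∫ x in (0:ℝ)..1, x ^ m * (1 - x) ^ k = (m ! * k ! : ℝ) / (m + k + 1)! := by
  have hβ := Complex.betaIntegral_eq_Gamma_mul_div (m + 1) (k + 1)
    (by simp only [Complex.add_re, Complex.natCast_re, Complex.one_re]; positivity)
    (by simp only [Complex.add_re, Complex.natCast_re, Complex.one_re]; positivity)
  have hsum : (m + 1 + (k + 1) : ℂ) = ((m + k + 1 : ℕ) : ℂ) + 1 := by push_cast; ring
  rw [hsum, Complex.Gamma_nat_eq_factorial, Complex.Gamma_nat_eq_factorial,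
    Complex.Gamma_nat_eq_factorial, Complex.betaIntegral] at hβ
  simp only [add_sub_cancel_right, Complex.cpow_natCast] at hβ
  apply Complex.ofReal_injective
  rw [← intervalIntegral.integral_ofReal]
  push_cast
  exact hβ

section SegmentParam

variable {E : Type*} [AddCommGroup E] [Module ℝ E]

/-- `(t, x, y) ↦ (1 - t) • (0, 0, y) + t • (1, x, -x)`, written out in coordinates. -/
def segmentParam (p : ℝ × E × E) : ℝ × E × E :=
  (p.1, p.1 • p.2.1, (1 - p.1) • p.2.2 - p.1 • p.2.1)

theorem convexHull_union_eq_image_segmentParam {K₁ K₂ : Set E} (hK₁ : Convex ℝ K₁)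
    (hK₂ : Convex ℝ K₂) (h₁ : K₁.Nonempty) (h₂ : K₂.Nonempty) :
    convexHull ℝ ((fun y => ((0:ℝ), (0:E), y)) '' K₂ ∪ (fun x => ((1:ℝ), x, -x)) '' K₁) =
      segmentParam '' Icc 0 1 ×ˢ K₁ ×ˢ K₂ := by
  have hc₂ : Convex ℝ ((fun y => ((0:ℝ), (0:E), y)) '' K₂) := by
    rintro _ ⟨y₁, hy₁, rfl⟩ _ ⟨y₂, hy₂, rfl⟩ a b ha hb hab
    exact ⟨a • y₁ + b • y₂, hK₂ hy₁ hy₂ ha hb hab, by simp⟩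
  have hc₁ : Convex ℝ ((fun x => ((1:ℝ), x, -x)) '' K₁) := by
    rintro _ ⟨x₁, hx₁, rfl⟩ _ ⟨x₂, hx₂, rfl⟩ a b ha hb hab
    exact ⟨a • x₁ + b • x₂, hK₁ hx₁ hx₂ ha hb hab, by simp [hab, add_comm]⟩
  have hseg : ∀ (t : ℝ) (x y : E),
      (1 - t) • ((0:ℝ), (0:E), y) + t • ((1:ℝ), x, -x) = segmentParam (t, x, y) := by
    intro t x y
    ext <;> simp [segmentParam, sub_eq_add_neg]
  rw [convexHull_union (h₂.image _) (h₁.image _), hc₂.convexHull_eq, hc₁.convexHull_eq]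
  ext p
  simp only [mem_convexJoin, segment_eq_image, mem_image, mem_prod]
  constructor
  · rintro ⟨_, ⟨y, hy, rfl⟩, _, ⟨x, hx, rfl⟩, t, ht, rfl⟩
    exact ⟨(t, x, y), ⟨ht, hx, hy⟩, (hseg t x y).symm⟩
  · rintro ⟨⟨t, x, y⟩, ⟨ht, hx, hy⟩, rfl⟩
    exact ⟨_, ⟨y, hy, rfl⟩, _, ⟨x, hx, rfl⟩, t, ht, hseg t x y⟩

theorem preimage_mk_image_segmentParam {t : ℝ} (ht : t ∈ Icc 0 1) (K₁ K₂ : Set E) :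
    Prod.mk t ⁻¹' (segmentParam '' Icc 0 1 ×ˢ K₁ ×ˢ K₂) =
      (fun q : E × E => (q.1, q.1 + q.2)) ⁻¹' ((t • K₁) ×ˢ ((1 - t) • K₂)) := by
  ext ⟨a, b⟩
  simp only [segmentParam, mem_preimage, mem_image, mem_prod, mem_smul_set, Prod.exists,
    Prod.mk.injEq]
  constructor
  · rintro ⟨s, x, y, ⟨-, hx, hy⟩, rfl, rfl, rfl⟩
    exact ⟨⟨x, hx, rfl⟩, y, hy, by abel⟩
  · rintro ⟨⟨x, hx, rfl⟩, y, hy, hxy⟩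
    exact ⟨t, x, y, ⟨ht, hx, hy⟩, rfl, rfl, by rw [hxy]; abel⟩

end SegmentParam

theorem prod_measure_image_segmentParam {E : Type*} [NormedAddCommGroup E] [NormedSpace ℝ E]
    [MeasurableSpace E] [BorelSpace E] [FiniteDimensional ℝ E] (μ : Measure E)
    [μ.IsAddHaarMeasure] {K₁ K₂ : Set E} (hK₁ : IsCompact K₁) (hK₂ : IsCompact K₂) :
    (volume.prod (μ.prod μ)) (segmentParam '' Icc 0 1 ×ˢ K₁ ×ˢ K₂) =
      ENNReal.ofReal (∫ t in (0:ℝ)..1, t ^ Module.finrank ℝ E * (1 - t) ^ Module.finrank ℝ E)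
        * μ K₁ * μ K₂ := by
  set n := Module.finrank ℝ E
  have hmeas : MeasurableSet (segmentParam '' Icc 0 1 ×ˢ K₁ ×ˢ K₂) :=
    ((isCompact_Icc.prod (hK₁.prod hK₂)).image (by unfold segmentParam; fun_prop)).measurableSet
  have hslice : ∀ t, μ.prod μ (Prod.mk t ⁻¹' (segmentParam '' Icc 0 1 ×ˢ K₁ ×ˢ K₂)) =
      (Icc 0 1).indicator (fun t => ENNReal.ofReal (t ^ n * (1 - t) ^ n) * (μ K₁ * μ K₂)) t := by
    intro t
    by_cases ht : t ∈ Icc (0:ℝ) 1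
    · rw [preimage_mk_image_segmentParam ht, (measurePreserving_prod_add μ μ).measure_preimage
        ((hK₁.smul t).measurableSet.prod (hK₂.smul (1 - t)).measurableSet).nullMeasurableSet,
        Measure.prod_prod, Measure.addHaar_smul_of_nonneg μ ht.1,
        Measure.addHaar_smul_of_nonneg μ (sub_nonneg.2 ht.2), indicator_of_mem ht,
        ENNReal.ofReal_mul (pow_nonneg ht.1 n)]
      ring
    · have hempty : Prod.mk t ⁻¹' (segmentParam '' Icc 0 1 ×ˢ K₁ ×ˢ K₂) = ∅ := by
        refine eq_empty_iff_forall_notMem.2 ?_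
        rintro q ⟨p, ⟨hp, -⟩, hpq⟩
        obtain rfl : p.1 = t := congrArg Prod.fst hpq
        exact ht hp
      rw [hempty, measure_empty, indicator_of_notMem ht]
  have hint : ∫⁻ t in Icc (0:ℝ) 1, ENNReal.ofReal (t ^ n * (1 - t) ^ n) =
      ENNReal.ofReal (∫ t in (0:ℝ)..1, t ^ n * (1 - t) ^ n) := by
    rw [intervalIntegral.integral_of_le zero_le_one, ← integral_Icc_eq_integral_Ioc,
      ofReal_integral_eq_lintegral_ofReal (Continuous.integrableOn_Icc (by fun_prop))]
    exact (ae_restrict_iff' measurableSet_Icc).2 (Filter.Eventually.of_forall fun t ht =>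
      mul_nonneg (pow_nonneg ht.1 n) (pow_nonneg (sub_nonneg.2 ht.2) n))
  rw [Measure.prod_apply hmeas, lintegral_congr hslice,
    lintegral_indicator measurableSet_Icc, lintegral_mul_const _ (by fun_prop), hint, mul_assoc]

theorem godbersen_stmt5 (n : ℕ)
    (K₁ K₂ : Set (EuclideanSpace ℝ (Fin n)))
    (hK₁_compact : IsCompact K₁) (hK₁_conv : Convex ℝ K₁)
    (hK₁_int : (interior K₁).Nonempty)
    (hK₂_compact : IsCompact K₂) (hK₂_conv : Convex ℝ K₂)
    (hK₂_int : (interior K₂).Nonempty)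
    (T : Set (ℝ × EuclideanSpace ℝ (Fin n) × EuclideanSpace ℝ (Fin n)))
    (hT : T = convexHull ℝ
      ((fun y => ((0:ℝ), (0 : EuclideanSpace ℝ (Fin n)), y)) '' K₂ ∪
       (fun x => ((1:ℝ), x, -x)) '' K₁)) :
    volume T = ((n.factorial * n.factorial : ℕ) : ℝ≥0∞) / ((2 * n + 1).factorial : ℕ)
      * volume K₁ * volume K₂ := by
  rw [hT, convexHull_union_eq_image_segmentParam hK₁_conv hK₂_conv (hK₁_int.mono interior_subset)
      (hK₂_int.mono interior_subset), Measure.volume_eq_prod, Measure.volume_eq_prod,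
    prod_measure_image_segmentParam volume hK₁_compact hK₂_compact, finrank_euclideanSpace_fin,
    integral_pow_mul_one_sub_pow, ← two_mul, ENNReal.ofReal_div_of_pos (by positivity),
    ← Nat.cast_mul, ENNReal.ofReal_natCast, ENNReal.ofReal_natCast]
end

section
/- Let K₁, K₂ be convex bodies in ℝⁿ, let T ⊂ ℝ × ℝⁿ × ℝⁿ be the convex hull of {(0, 0, y) : y ∈ K₂} ∪ {(1, x, −x) : x ∈ K₁}, and fix θ₀ ∈ [0,1]. Then the intersection of T with the affine subspace E = {(θ₀, x, 0) : x ∈ ℝⁿ} equals {(θ₀, x, 0) : x ∈ θ₀K₁ ∩ (1−θ₀)K₂}. -/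
open Set Pointwise

/-!
Both generating sets are convex and nonempty, so `T` is the union of the segments from
`(0, 0, y)` to `(1, x, -x)` with `y ∈ K₂`, `x ∈ K₁`. The point at parameter `t` on such a segment
is `(t, t • x, (1 - t) • y - t • x)`: it lies in `E` exactly when `t = θ₀` and
`θ₀ • x = (1 - θ₀) • y`, and this common value is then the middle coordinate.
-/

theorem Convex.image_zero_zero_mk {𝕜 E : Type*} [Semiring 𝕜] [PartialOrder 𝕜]
    [AddCommMonoid E] [Module 𝕜 E] {B : Set E} (hB : Convex 𝕜 B) :
    Convex 𝕜 ((fun y => ((0 : 𝕜), (0 : E), y)) '' B) :=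
  hB.is_linear_image ⟨fun _ _ => by simp, fun _ _ => by simp⟩

theorem Convex.image_one_mk_neg {𝕜 E : Type*} [Ring 𝕜] [PartialOrder 𝕜]
    [AddCommGroup E] [Module 𝕜 E] {A : Set E} (hA : Convex 𝕜 A) :
    Convex 𝕜 ((fun x => ((1 : 𝕜), x, -x)) '' A) := by
  rintro _ ⟨x₁, hx₁, rfl⟩ _ ⟨x₂, hx₂, rfl⟩ a b ha hb hab
  refine ⟨a • x₁ + b • x₂, hA hx₁ hx₂ ha hb hab, ?_⟩
  simp [hab, add_comm]

section

variable {𝕜 E : Type*} [Field 𝕜] [LinearOrder 𝕜] [IsStrictOrderedRing 𝕜]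
  [AddCommGroup E] [Module 𝕜 E] {A B : Set E}

theorem mem_convexJoin_image_zero_zero_mk_image_one_mk_neg {p : 𝕜 × E × E} :
    p ∈ convexJoin 𝕜 ((fun y => ((0 : 𝕜), (0 : E), y)) '' B) ((fun x => ((1 : 𝕜), x, -x)) '' A) ↔
      ∃ y ∈ B, ∃ x ∈ A, ∃ t ∈ Icc (0 : 𝕜) 1, p = (t, t • x, (1 - t) • y - t • x) := by
  simp only [mem_convexJoin, segment_eq_image, mem_image, exists_exists_and_eq_and]
  simp [eq_comm, sub_eq_add_neg]

theorem mk_zero_mem_convexHull_image_union_iff (hA : Convex 𝕜 A) (hB : Convex 𝕜 B)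
    (hA₀ : A.Nonempty) (hB₀ : B.Nonempty) {θ : 𝕜} {z : E} :
    (θ, z, 0) ∈ convexHull 𝕜
        ((fun y => ((0 : 𝕜), (0 : E), y)) '' B ∪ (fun x => ((1 : 𝕜), x, -x)) '' A) ↔
      θ ∈ Icc 0 1 ∧ z ∈ θ • A ∩ (1 - θ) • B := by
  rw [hB.image_zero_zero_mk.convexHull_union hA.image_one_mk_neg (hB₀.image _) (hA₀.image _),
    mem_convexJoin_image_zero_zero_mk_image_one_mk_neg]
  constructor
  · rintro ⟨y, hy, x, hx, t, ht, h⟩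
    simp only [Prod.mk.injEq, eq_comm (a := (0 : E)), sub_eq_zero] at h
    obtain ⟨rfl, rfl, h⟩ := h
    exact ⟨ht, smul_mem_smul_set hx, h ▸ smul_mem_smul_set hy⟩
  · rintro ⟨hθ, ⟨x, hx, rfl⟩, y, hy, h⟩
    exact ⟨y, hy, x, hx, θ, hθ, by simp [h]⟩

end

theorem godbersen_stmt6_general (n : ℕ)
    (K₁ K₂ : Set (EuclideanSpace ℝ (Fin n)))
    (hK₁_conv : Convex ℝ K₁)
    (hK₁_int : (interior K₁).Nonempty)
    (hK₂_conv : Convex ℝ K₂)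
    (hK₂_int : (interior K₂).Nonempty)
    (T : Set (ℝ × EuclideanSpace ℝ (Fin n) × EuclideanSpace ℝ (Fin n)))
    (hT : T = convexHull ℝ
      ((fun y => ((0:ℝ), (0 : EuclideanSpace ℝ (Fin n)), y)) '' K₂ ∪
       (fun x => ((1:ℝ), x, -x)) '' K₁))
    (θ₀ : ℝ) (hθ₀ : θ₀ ∈ Set.Icc (0:ℝ) 1) :
    T ∩ {p : ℝ × EuclideanSpace ℝ (Fin n) × EuclideanSpace ℝ (Fin n) |
            p.1 = θ₀ ∧ p.2.2 = 0}
      = (fun x => (θ₀, x, (0 : EuclideanSpace ℝ (Fin n)))) ''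
          (θ₀ • K₁ ∩ (1 - θ₀) • K₂) := by
  have hslice := fun (θ : ℝ) z => mk_zero_mem_convexHull_image_union_iff (θ := θ) (z := z)
    hK₁_conv hK₂_conv (hK₁_int.mono interior_subset) (hK₂_int.mono interior_subset)
  subst hT
  ext ⟨θ, z, w⟩
  simp only [mem_inter_iff, mem_ofPred_eq, mem_image, Prod.mk.injEq]
  constructor
  · rintro ⟨hp, rfl, rfl⟩
    exact ⟨z, ((hslice _ _).1 hp).2, rfl, rfl, rfl⟩
  · rintro ⟨z, hz, rfl, rfl, rfl⟩
    exact ⟨(hslice _ _).2 ⟨hθ₀, hz⟩, rfl, rfl⟩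

theorem godbersen_stmt6 (n : ℕ)
    (K₁ K₂ : Set (EuclideanSpace ℝ (Fin n)))
    (hK₁_compact : IsCompact K₁) (hK₁_conv : Convex ℝ K₁)
    (hK₁_int : (interior K₁).Nonempty)
    (hK₂_compact : IsCompact K₂) (hK₂_conv : Convex ℝ K₂)
    (hK₂_int : (interior K₂).Nonempty)
    (T : Set (ℝ × EuclideanSpace ℝ (Fin n) × EuclideanSpace ℝ (Fin n)))
    (hT : T = convexHull ℝ
      ((fun y => ((0:ℝ), (0 : EuclideanSpace ℝ (Fin n)), y)) '' K₂ ∪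
       (fun x => ((1:ℝ), x, -x)) '' K₁))
    (θ₀ : ℝ) (hθ₀ : θ₀ ∈ Set.Icc (0:ℝ) 1) :
    T ∩ {p : ℝ × EuclideanSpace ℝ (Fin n) × EuclideanSpace ℝ (Fin n) |
            p.1 = θ₀ ∧ p.2.2 = 0}
      = (fun x => (θ₀, x, (0 : EuclideanSpace ℝ (Fin n)))) ''
          (θ₀ • K₁ ∩ (1 - θ₀) • K₂) :=
  godbersen_stmt6_general n K₁ K₂ hK₁_conv hK₁_int hK₂_conv hK₂_int T hT θ₀ hθ₀
end

section
/- Let K and L be convex bodies in ℝⁿ, both containing the origin. Then vol(conv(K ∪ (−L))) · vol((K° + L°)°) ≤ vol(K) · vol(L), where A° = {y ∈ ℝⁿ : ⟨x, y⟩ ≤ 1 for all x ∈ A} denotes the polar body of A with respect to the standard inner product. -/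
open MeasureTheory Set Pointwise
open scoped RealInnerProductSpace

/-- The polar body of a set `A ⊆ ℝⁿ`: all `y` with `⟪x, y⟫ ≤ 1` for every `x ∈ A`. -/
def polarBody {n : ℕ} (A : Set (EuclideanSpace ℝ (Fin n))) :
    Set (EuclideanSpace ℝ (Fin n)) :=
  {y | ∀ x ∈ A, ⟪x, y⟫ ≤ 1}

/-! For `A ∋ 0` star-shaped write `g_A = exp (-‖·‖_A)` with `‖·‖_A` the gauge of `A`; then
`∫ g_A = n! vol A`. Put `C = conv (K ∪ -L)` and `M = (K° + L°)°`. By the bipolar theorem the gauge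
of `M` dominates the sum of the gauges of `K` and `L`, so `g_M ≤ g_K g_L`. A point of `ρ • C` is
`u - v` with `u ∈ a • K`, `v ∈ b • L`, `a + b = ρ`, and convexity gives
`e^{-ρ} g_K g_L ≤ g_K (· + u) g_L (· + v)`, whence `g_C(d) ∫ g_K g_L ≤ ∫ g_K(· + d) g_L`.
Integrating in `d`, `∫ g_C ∫ g_M ≤ ∫ g_C ∫ g_K g_L ≤ ∫ g_K ∫ g_L`, and the factors `n!` cancel. -/

open Real Module
open scoped ENNReal Nat

lemma StarConvex.smul_set_subset_smul_set {E : Type*} [AddCommGroup E] [Module ℝ E] {A : Set E}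
    (hA : StarConvex ℝ 0 A) {r s : ℝ} (hr : 0 < r) (hrs : r ≤ s) : r • A ⊆ s • A :=
  calc r • A ⊆ r • ((s / r) • A) :=
        smul_set_mono fun _ hx => hA.mem_smul hx ((one_le_div hr).2 hrs)
    _ = s • A := by rw [smul_smul, mul_div_cancel₀ _ hr.ne']

lemma ofReal_exp_neg_le_of_forall_lt {c : ℝ≥0∞} {r : ℝ}
    (h : ∀ s, r < s → ENNReal.ofReal (exp (-s)) ≤ c) : ENNReal.ofReal (exp (-r)) ≤ c :=
  le_of_tendsto
    (ENNReal.continuous_ofReal.comp (continuous_exp.comp continuous_neg)).continuousWithinAt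
    (eventually_nhdsWithin_of_forall (s := Ioi r) h)

lemma lintegral_exp_neg_Ioi (a : ℝ) :
    ∫⁻ r in Ioi a, ENNReal.ofReal (exp (-r)) = ENNReal.ofReal (exp (-a)) := by
  rw [← ofReal_integral_eq_lintegral_ofReal (integrableOn_exp_neg_Ioi a)
    (.of_forall fun _ => (exp_pos _).le), integral_exp_neg_Ioi]

lemma lintegral_pow_mul_exp_neg_Ioi (d : ℕ) :
    ∫⁻ r in Ioi 0, ENNReal.ofReal (r ^ d * exp (-r)) = d ! := by
  have hd : (0 : ℝ) < d + 1 := by positivity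
  have hpow : EqOn (fun r : ℝ => exp (-r) * r ^ ((d : ℝ) + 1 - 1))
      (fun r => r ^ d * exp (-r)) (Ioi 0) := fun r _ => by
    simp only [add_sub_cancel_right, rpow_natCast, mul_comm]
  rw [← ofReal_integral_eq_lintegral_ofReal
      ((GammaIntegral_convergent hd).congr_fun hpow measurableSet_Ioi)
      ((ae_restrict_iff' measurableSet_Ioi).2 (.of_forall fun r (hr : 0 < r) => by positivity)),
    ← setIntegral_congr_fun measurableSet_Ioi hpow, ← Gamma_eq_integral hd,
    Gamma_nat_eq_factorial, ENNReal.ofReal_natCast]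

section expNegGauge

variable {E : Type*} [NormedAddCommGroup E] [NormedSpace ℝ E] {A : Set E} {x : E}

/-- `exp (-‖x‖_A)` for the gauge `‖x‖_A = inf {r > 0 | x ∈ r • A}`, taken to be `0` when `x` lies
in no dilate of `A` (where Mathlib's `gauge` would be `0` and the exponential `1`). -/
noncomputable def expNegGauge (A : Set E) (x : E) : ℝ≥0∞ :=
  ⨆ (r : ℝ) (_ : 0 < r) (_ : x ∈ r • A), ENNReal.ofReal (exp (-r))

lemma expNegGauge_le_iff {c : ℝ≥0∞} :
    expNegGauge A x ≤ c ↔ ∀ r, 0 < r → x ∈ r • A → ENNReal.ofReal (exp (-r)) ≤ c := by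
  simp only [expNegGauge, iSup_le_iff]

lemma ofReal_exp_neg_le_expNegGauge {r : ℝ} (hr : 0 < r) (hx : x ∈ r • A) :
    ENNReal.ofReal (exp (-r)) ≤ expNegGauge A x :=
  expNegGauge_le_iff.1 le_rfl r hr hx

lemma expNegGauge_eq_setLIntegral (hA : StarConvex ℝ 0 A) (x : E) :
    expNegGauge A x = ∫⁻ r in {r : ℝ | 0 < r ∧ x ∈ r • A}, ENNReal.ofReal (exp (-r)) := by
  set T := {r : ℝ | 0 < r ∧ x ∈ r • A}
  rcases T.eq_empty_or_nonempty with hT | hT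
  · rw [hT, Measure.restrict_empty, lintegral_zero_measure, ← nonpos_iff_eq_zero,
      expNegGauge_le_iff]
    exact fun r hr hx => (hT.subset ⟨hr, hx⟩).elim
  have hbdd : BddBelow T := ⟨0, fun r hr => hr.1.le⟩
  have hIoi : Ioi (sInf T) ⊆ T := fun r hr => by
    obtain ⟨t, ht, htr⟩ := (csInf_lt_iff hbdd hT).1 hr
    exact ⟨ht.1.trans htr, hA.smul_set_subset_smul_set ht.1 htr.le ht.2⟩
  have hIci : T ⊆ Ici (sInf T) := fun r hr => csInf_le hbdd hr
  have hae : T =ᵐ[volume] Ioi (sInf T) :=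
    (hIci.eventuallyLE.trans Ioi_ae_eq_Ici.symm.le).antisymm hIoi.eventuallyLE
  rw [setLIntegral_congr hae, lintegral_exp_neg_Ioi]
  refine le_antisymm (expNegGauge_le_iff.2 fun r hr hx => ?_) ?_
  · exact ENNReal.ofReal_le_ofReal (exp_le_exp.2 (neg_le_neg (hIci ⟨hr, hx⟩)))
  · exact ofReal_exp_neg_le_of_forall_lt fun s hs =>
      ofReal_exp_neg_le_expNegGauge (hIoi hs).1 (hIoi hs).2

lemma measurable_indicator_inv_smul_mul_exp_neg [MeasurableSpace E] [BorelSpace E]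
    [SecondCountableTopology E] (hm : MeasurableSet A) :
    Measurable fun p : E × ℝ => A.indicator 1 (p.2⁻¹ • p.1) * ENNReal.ofReal (exp (-p.2)) :=
  ((measurable_one.indicator hm).comp (measurable_snd.inv.smul measurable_fst)).mul
    measurable_snd.neg.exp.ennreal_ofReal

lemma expNegGauge_eq_lintegral_indicator [MeasurableSpace E] [BorelSpace E]
    [SecondCountableTopology E] (hA : StarConvex ℝ 0 A) (hm : MeasurableSet A) (x : E) :
    expNegGauge A x = ∫⁻ r in Ioi 0, A.indicator 1 (r⁻¹ • x) * ENNReal.ofReal (exp (-r)) := by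
  set S := {r : ℝ | r⁻¹ • x ∈ A}
  have hT : {r : ℝ | 0 < r ∧ x ∈ r • A} = S ∩ Ioi 0 := by
    ext r
    exact (and_congr_right fun hr => mem_smul_set_iff_inv_smul_mem₀ hr.ne' _ _).trans and_comm
  have hind : (fun r : ℝ => A.indicator 1 (r⁻¹ • x) * ENNReal.ofReal (exp (-r)))
      = S.indicator fun r => ENNReal.ofReal (exp (-r)) := by
    ext r; by_cases h : r⁻¹ • x ∈ A <;> simp [S, h]
  rw [expNegGauge_eq_setLIntegral hA, hT, hind,
    setLIntegral_indicator (show MeasurableSet S from hm.preimage (measurable_inv.smul_const x))]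

lemma measurable_expNegGauge [MeasurableSpace E] [BorelSpace E] [SecondCountableTopology E]
    (hA : StarConvex ℝ 0 A) (hm : MeasurableSet A) : Measurable (expNegGauge A) := by
  simp_rw [funext (expNegGauge_eq_lintegral_indicator hA hm)]
  exact (measurable_indicator_inv_smul_mul_exp_neg hm).lintegral_prod_right'

theorem lintegral_expNegGauge [MeasurableSpace E] [BorelSpace E] [FiniteDimensional ℝ E]
    (μ : Measure E) [μ.IsAddHaarMeasure] (hA : StarConvex ℝ 0 A) (hm : MeasurableSet A) :
    ∫⁻ x, expNegGauge A x ∂μ = (finrank ℝ E)! * μ A := by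
  set F : E → ℝ → ℝ≥0∞ := fun x r => A.indicator 1 (r⁻¹ • x) * ENNReal.ofReal (exp (-r))
  have hfiber : ∀ r ∈ Ioi (0 : ℝ),
      ∫⁻ x, F x r ∂μ = ENNReal.ofReal (r ^ finrank ℝ E * exp (-r)) * μ A := by
    intro r (hr : 0 < r)
    have hpre : MeasurableSet ((r⁻¹ • ·) ⁻¹' A) := hm.preimage (measurable_const_smul _)
    have hind : (fun x => A.indicator 1 (r⁻¹ • x)) = ((r⁻¹ • ·) ⁻¹' A).indicator (1 : E → ℝ≥0∞) :=
      funext fun x => (indicator_comp_right (r⁻¹ • ·) (g := 1)).symm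
    simp only [F]
    rw [lintegral_mul_const _ (by rw [hind]; exact measurable_one.indicator hpre), hind,
      lintegral_indicator_one hpre, Measure.addHaar_preimage_smul μ (inv_ne_zero hr.ne'),
      inv_pow, inv_inv, abs_of_pos (by positivity), ENNReal.ofReal_mul (by positivity),
      mul_right_comm]
  calc ∫⁻ x, expNegGauge A x ∂μ = ∫⁻ r in Ioi 0, ∫⁻ x, F x r ∂μ := by
        simp_rw [expNegGauge_eq_lintegral_indicator hA hm]
        exact lintegral_lintegral_swap (measurable_indicator_inv_smul_mul_exp_neg hm).aemeasurable
    _ = ∫⁻ r in Ioi 0, ENNReal.ofReal (r ^ finrank ℝ E * exp (-r)) * μ A :=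
        setLIntegral_congr_fun measurableSet_Ioi hfiber
    _ = (finrank ℝ E)! * μ A := by
        rw [lintegral_mul_const _ (by fun_prop), lintegral_pow_mul_exp_neg_Ioi]

lemma ofReal_exp_neg_mul_expNegGauge_le (hA : Convex ℝ A) {a : ℝ} (ha : 0 ≤ a) {u : E}
    (hu : u ∈ a • A) (z : E) :
    ENNReal.ofReal (exp (-a)) * expNegGauge A z ≤ expNegGauge A (z + u) := by
  simp only [expNegGauge, ENNReal.mul_iSup, iSup_le_iff]
  intro r hr hz
  rw [← ENNReal.ofReal_mul (exp_pos _).le, ← exp_add, ← neg_add, add_comm]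
  exact ofReal_exp_neg_le_expNegGauge (by linarith) (hA.add_smul hr.le ha ▸ add_mem_add hz hu)

end expNegGauge

lemma lintegral_mul_le_of_le_lintegral_translate {G : Type*} [MeasurableSpace G] [AddCommGroup G]
    [MeasurableAdd₂ G] (μ : Measure G) [SFinite μ] [μ.IsAddLeftInvariant] {f g h : G → ℝ≥0∞}
    (hf : Measurable f) (hg : Measurable g) {J : ℝ≥0∞}
    (H : ∀ d, h d * J ≤ ∫⁻ w, f (w + d) * g w ∂μ) :
    (∫⁻ d, h d ∂μ) * J ≤ (∫⁻ x, f x ∂μ) * ∫⁻ x, g x ∂μ :=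
  calc (∫⁻ d, h d ∂μ) * J ≤ ∫⁻ d, h d * J ∂μ := lintegral_mul_const_le _ _
    _ ≤ ∫⁻ d, ∫⁻ w, f (w + d) * g w ∂μ ∂μ := lintegral_mono H
    _ = ∫⁻ w, ∫⁻ d, f (w + d) * g w ∂μ ∂μ :=
        lintegral_lintegral_swap ((hf.comp (measurable_snd.add measurable_fst)).mul
          (hg.comp measurable_snd)).aemeasurable
    _ = ∫⁻ w, (∫⁻ x, f x ∂μ) * g w ∂μ := by
        congr 1 with w
        rw [lintegral_mul_const _ (by fun_prop), lintegral_add_left_eq_self]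
    _ = (∫⁻ x, f x ∂μ) * ∫⁻ x, g x ∂μ := lintegral_const_mul _ hg

section ConvexHullUnion

variable {E : Type*} [NormedAddCommGroup E] [NormedSpace ℝ E] {K L : Set E}

lemma IsCompact.convexHull_union (hKc : IsCompact K) (hLc : IsCompact L) (hK : Convex ℝ K)
    (hL : Convex ℝ L) (hKne : K.Nonempty) (hLne : L.Nonempty) :
    IsCompact (convexHull ℝ (K ∪ L)) := by
  have hjoin : convexHull ℝ (K ∪ L) =
      (fun p : ℝ × E × E => (1 - p.1) • p.2.1 + p.1 • p.2.2) '' (Icc 0 1 ×ˢ K ×ˢ L) := by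
    rw [hK.convexHull_union hL hKne hLne]
    ext z
    simp only [mem_convexJoin, segment_eq_image, mem_image, mem_prod, Prod.exists]
    constructor
    · rintro ⟨a, ha, b, hb, t, ht, rfl⟩
      exact ⟨t, a, b, ⟨ht, ha, hb⟩, rfl⟩
    · rintro ⟨t, a, b, ⟨ht, ha, hb⟩, rfl⟩
      exact ⟨a, ha, b, hb, t, ht, rfl⟩
  rw [hjoin]
  exact (isCompact_Icc.prod (hKc.prod hLc)).image (by fun_prop)

lemma exists_sub_of_mem_smul_convexHull_union_neg (hK : Convex ℝ K) (hL : Convex ℝ L)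
    (hKne : K.Nonempty) (hLne : L.Nonempty) {ρ : ℝ} (hρ : 0 ≤ ρ) {d : E}
    (hd : d ∈ ρ • convexHull ℝ (K ∪ -L)) :
    ∃ a b : ℝ, ∃ u v : E, 0 ≤ a ∧ 0 ≤ b ∧ a + b = ρ ∧ u ∈ a • K ∧ v ∈ b • L ∧ d = u - v := by
  obtain ⟨c, hc, rfl⟩ := hd
  rw [hK.convexHull_union hL.neg hKne hLne.neg, mem_convexJoin] at hc
  obtain ⟨x, hx, y, hy, s, t, hs, ht, hst, rfl⟩ := hc
  refine ⟨ρ * s, ρ * t, (ρ * s) • x, (ρ * t) • -y, by positivity, by positivity, by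
    rw [← mul_add, hst, mul_one], smul_mem_smul_set hx, smul_mem_smul_set hy, by module⟩

lemma expNegGauge_convexHull_union_neg_mul_le [MeasurableSpace E] [MeasurableAdd E]
    (μ : Measure E) [μ.IsAddRightInvariant] (hK : Convex ℝ K) (hL : Convex ℝ L)
    (hKne : K.Nonempty) (hLne : L.Nonempty) (d : E) :
    expNegGauge (convexHull ℝ (K ∪ -L)) d * ∫⁻ z, expNegGauge K z * expNegGauge L z ∂μ
      ≤ ∫⁻ w, expNegGauge K (w + d) * expNegGauge L w ∂μ := by
  simp only [expNegGauge.eq_1 (convexHull ℝ (K ∪ -L)), ENNReal.iSup_mul, iSup_le_iff]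
  intro ρ hρ hd
  obtain ⟨a, b, u, v, ha, hb, rfl, hu, hv, rfl⟩ :=
    exists_sub_of_mem_smul_convexHull_union_neg hK hL hKne hLne hρ.le hd
  calc ENNReal.ofReal (exp (-(a + b))) * ∫⁻ z, expNegGauge K z * expNegGauge L z ∂μ
      = ∫⁻ z, (ENNReal.ofReal (exp (-a)) * expNegGauge K z)
          * (ENNReal.ofReal (exp (-b)) * expNegGauge L z) ∂μ := by
        rw [← lintegral_const_mul' _ _ ENNReal.ofReal_ne_top, neg_add, exp_add,
          ENNReal.ofReal_mul (exp_pos _).le]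
        congr 1 with z
        ring
    _ ≤ ∫⁻ z, expNegGauge K (z + u) * expNegGauge L (z + v) ∂μ :=
        lintegral_mono fun z => mul_le_mul' (ofReal_exp_neg_mul_expNegGauge_le hK ha hu z)
          (ofReal_exp_neg_mul_expNegGauge_le hL hb hv z)
    _ = ∫⁻ w, expNegGauge K (w + (u - v)) * expNegGauge L w ∂μ := by
        rw [← lintegral_add_right_eq_self
          (fun w => expNegGauge K (w + (u - v)) * expNegGauge L w) v]
        simp only [add_add_sub_cancel]

end ConvexHullUnion

section PolarBody

variable {n : ℕ} {A K L : Set (EuclideanSpace ℝ (Fin n))} {x z : EuclideanSpace ℝ (Fin n)}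

lemma zero_mem_polarBody (A : Set (EuclideanSpace ℝ (Fin n))) : 0 ∈ polarBody A :=
  fun x _ => by simp

lemma convex_polarBody (A : Set (EuclideanSpace ℝ (Fin n))) : Convex ℝ (polarBody A) := by
  simp only [polarBody, ofPred_forall]
  exact convex_iInter₂ fun x _ => convex_halfSpace_le (innerₛₗ ℝ x).isLinear 1

lemma isClosed_polarBody (A : Set (EuclideanSpace ℝ (Fin n))) : IsClosed (polarBody A) := by
  simp only [polarBody, ofPred_forall]
  exact isClosed_biInter fun x _ => isClosed_le (by fun_prop) continuous_const

lemma inner_le_of_mem_smul_polarBody {ρ : ℝ} (hρ : 0 ≤ ρ) (hz : z ∈ ρ • polarBody A)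
    (hx : x ∈ A) : ⟪x, z⟫ ≤ ρ := by
  obtain ⟨y, hy, rfl⟩ := hz
  rw [real_inner_smul_right]
  simpa using mul_le_mul_of_nonneg_left (hy x hx) hρ

lemma polarBody_polarBody_subset (hKc : IsClosed K) (hK : Convex ℝ K) (hK0 : 0 ∈ K) :
    polarBody (polarBody K) ⊆ K := by
  intro z hz
  by_contra hzK
  obtain ⟨f, c, hfK, hfz⟩ := geometric_hahn_banach_closed_point hK hKc hzK
  have hc : 0 < c := by simpa using hfK 0 hK0
  set w := (InnerProductSpace.toDual ℝ _).symm f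
  have hw : ∀ y, ⟪y, w⟫ = f y := fun y => by
    rw [real_inner_comm]; exact InnerProductSpace.toDual_symm_apply
  have hcw : c⁻¹ • w ∈ polarBody K := fun x hx => by
    rw [real_inner_smul_right, hw, inv_mul_le_iff₀ hc, mul_one]
    exact (hfK x hx).le
  have := hz _ hcw
  rw [real_inner_smul_left, real_inner_comm, hw, inv_mul_le_iff₀ hc, mul_one] at this
  linarith

lemma mem_smul_of_forall_inner_le (hKc : IsClosed K) (hK : Convex ℝ K) (hK0 : 0 ∈ K) {r : ℝ}
    (hr : 0 < r) (h : ∀ u ∈ polarBody K, ⟪u, z⟫ ≤ r) : z ∈ r • K := by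
  refine (mem_smul_set_iff_inv_smul_mem₀ hr.ne' _ _).2 (polarBody_polarBody_subset hKc hK hK0 ?_)
  intro u hu
  rw [real_inner_smul_right, inv_mul_le_iff₀ hr, mul_one]
  exact h u hu

/-- With `a`, `b` the suprema of `⟪·, z⟫` over `K°` and `L°` one has `a + b ≤ ρ`, and bipolarity
puts `z` in every dilate `r • K` with `a < r` and `r • L` with `b < r`. -/
lemma exists_mem_smul_of_mem_smul_polarBody_add (hKc : IsClosed K) (hK : Convex ℝ K)
    (hK0 : 0 ∈ K) (hLc : IsClosed L) (hL : Convex ℝ L) (hL0 : 0 ∈ L) {ρ s : ℝ} (hρ : 0 ≤ ρ)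
    (hρs : ρ < s) (hz : z ∈ ρ • polarBody (polarBody K + polarBody L)) :
    ∃ r₁ r₂ : ℝ, 0 < r₁ ∧ 0 < r₂ ∧ r₁ + r₂ ≤ s ∧ z ∈ r₁ • K ∧ z ∈ r₂ • L := by
  set S := (⟪·, z⟫) '' polarBody K
  set T := (⟪·, z⟫) '' polarBody L
  have hST : ∀ t ∈ S + T, t ≤ ρ := by
    rintro _ ⟨_, ⟨u, hu, rfl⟩, _, ⟨v, hv, rfl⟩, rfl⟩
    simpa only [inner_add_left] using inner_le_of_mem_smul_polarBody hρ hz (add_mem_add hu hv)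
  have h0S : (0 : ℝ) ∈ S := ⟨0, zero_mem_polarBody K, inner_zero_left _⟩
  have h0T : (0 : ℝ) ∈ T := ⟨0, zero_mem_polarBody L, inner_zero_left _⟩
  have hSb : BddAbove S := ⟨ρ, fun t ht => by simpa using hST _ (add_mem_add ht h0T)⟩
  have hTb : BddAbove T := ⟨ρ, fun t ht => by simpa using hST _ (add_mem_add h0S ht)⟩
  have hsum : sSup S + sSup T ≤ ρ := by
    rw [← csSup_add ⟨0, h0S⟩ hSb ⟨0, h0T⟩ hTb]
    exact csSup_le (Set.add_nonempty.2 ⟨⟨0, h0S⟩, ⟨0, h0T⟩⟩) hST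
  have hS0 := le_csSup hSb h0S
  have hT0 := le_csSup hTb h0T
  refine ⟨sSup S + (s - ρ) / 2, sSup T + (s - ρ) / 2, by linarith, by linarith, by linarith,
    mem_smul_of_forall_inner_le hKc hK hK0 (by linarith) fun u hu => ?_,
    mem_smul_of_forall_inner_le hLc hL hL0 (by linarith) fun v hv => ?_⟩
  · linarith [le_csSup hSb ⟨u, hu, rfl⟩]
  · linarith [le_csSup hTb ⟨v, hv, rfl⟩]

lemma expNegGauge_polarBody_add_le (hKc : IsClosed K) (hK : Convex ℝ K) (hK0 : 0 ∈ K)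
    (hLc : IsClosed L) (hL : Convex ℝ L) (hL0 : 0 ∈ L) (z : EuclideanSpace ℝ (Fin n)) :
    expNegGauge (polarBody (polarBody K + polarBody L)) z ≤ expNegGauge K z * expNegGauge L z := by
  refine expNegGauge_le_iff.2 fun ρ hρ hz => ofReal_exp_neg_le_of_forall_lt fun s hs => ?_
  obtain ⟨r₁, r₂, hr₁, hr₂, hrs, hz₁, hz₂⟩ :=
    exists_mem_smul_of_mem_smul_polarBody_add hKc hK hK0 hLc hL hL0 hρ.le hs hz
  calc ENNReal.ofReal (exp (-s)) ≤ ENNReal.ofReal (exp (-r₁)) * ENNReal.ofReal (exp (-r₂)) := by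
        rw [← ENNReal.ofReal_mul (exp_pos _).le, ← exp_add]
        exact ENNReal.ofReal_le_ofReal (exp_le_exp.2 (by linarith))
    _ ≤ expNegGauge K z * expNegGauge L z :=
        mul_le_mul' (ofReal_exp_neg_le_expNegGauge hr₁ hz₁) (ofReal_exp_neg_le_expNegGauge hr₂ hz₂)

end PolarBody

theorem conv_union_polar_sum_general (n : ℕ)
    (K L : Set (EuclideanSpace ℝ (Fin n)))
    (hK_compact : IsCompact K) (hK_conv : Convex ℝ K)
    (hK0 : (0 : EuclideanSpace ℝ (Fin n)) ∈ K)
    (hL_compact : IsCompact L) (hL_conv : Convex ℝ L)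
    (hL0 : (0 : EuclideanSpace ℝ (Fin n)) ∈ L) :
    volume (convexHull ℝ (K ∪ (-L))) * volume (polarBody (polarBody K + polarBody L))
      ≤ volume K * volume L := by
  set C := convexHull ℝ (K ∪ -L)
  set M := polarBody (polarBody K + polarBody L)
  set c : ℝ≥0∞ := ((finrank ℝ (EuclideanSpace ℝ (Fin n))).factorial : ℝ≥0∞)
  have hK := hK_conv.starConvex hK0
  have hL := hL_conv.starConvex hL0
  have hC : StarConvex ℝ 0 C :=
    (convex_convexHull ℝ _).starConvex (subset_convexHull ℝ _ (.inl hK0))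
  have hM : StarConvex ℝ 0 M := (convex_polarBody _).starConvex (zero_mem_polarBody _)
  have hKm := hK_compact.isClosed.measurableSet
  have hLm := hL_compact.isClosed.measurableSet
  have hCm : MeasurableSet C := (hK_compact.convexHull_union hL_compact.neg hK_conv hL_conv.neg
    ⟨0, hK0⟩ ⟨0, by simpa using hL0⟩).isClosed.measurableSet
  have hMKL : ∫⁻ z, expNegGauge M z ≤ ∫⁻ z, expNegGauge K z * expNegGauge L z :=
    lintegral_mono (expNegGauge_polarBody_add_le hK_compact.isClosed hK_conv hK0
      hL_compact.isClosed hL_conv hL0)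
  have hCKL := lintegral_mul_le_of_le_lintegral_translate volume (measurable_expNegGauge hK hKm)
    (measurable_expNegGauge hL hLm)
    (expNegGauge_convexHull_union_neg_mul_le volume hK_conv hL_conv ⟨0, hK0⟩ ⟨0, hL0⟩)
  have key : (c * c) * (volume C * volume M) ≤ (c * c) * (volume K * volume L) := by
    rw [mul_mul_mul_comm, mul_mul_mul_comm c c, ← lintegral_expNegGauge volume hC hCm,
      ← lintegral_expNegGauge volume hM (isClosed_polarBody _).measurableSet,
      ← lintegral_expNegGauge volume hK hKm, ← lintegral_expNegGauge volume hL hLm]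
    exact (mul_le_mul_right hMKL _).trans hCKL
  exact (ENNReal.mul_le_mul_iff_right (by positivity) (by finiteness)).1 key

theorem conv_union_polar_sum (n : ℕ)
    (K L : Set (EuclideanSpace ℝ (Fin n)))
    (hK_compact : IsCompact K) (hK_conv : Convex ℝ K)
    (hK_int : (interior K).Nonempty) (hK0 : (0 : EuclideanSpace ℝ (Fin n)) ∈ K)
    (hL_compact : IsCompact L) (hL_conv : Convex ℝ L)
    (hL_int : (interior L).Nonempty) (hL0 : (0 : EuclideanSpace ℝ (Fin n)) ∈ L) :
    volume (convexHull ℝ (K ∪ (-L))) * volume (polarBody (polarBody K + polarBody L))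
      ≤ volume K * volume L :=
  conv_union_polar_sum_general n K L hK_compact hK_conv hK0 hL_compact hL_conv hL0
end

section
/- Let n ∈ ℕ and λ ∈ [0,1]. Then the finite sequence j ↦ λ^j(1−λ)^{n−j} + λ^{n−j}(1−λ)^j is (weakly) decreasing on integers j with 0 ≤ j ≤ n/2; that is, for integers 0 ≤ i ≤ j ≤ n/2 one has λ^j(1−λ)^{n−j} + λ^{n−j}(1−λ)^j ≤ λ^i(1−λ)^{n−i} + λ^{n−i}(1−λ)^i. -/
lemma symm_bernstein_step (n : ℕ) (lam : ℝ) (h0 : 0 ≤ lam) (h1 : lam ≤ 1)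
    (j : ℕ) (h : 2 * (j + 1) ≤ n) :
    lam ^ (j+1) * (1 - lam) ^ (n - (j+1)) + lam ^ (n - (j+1)) * (1 - lam) ^ (j+1)
      ≤ lam ^ j * (1 - lam) ^ (n - j) + lam ^ (n - j) * (1 - lam) ^ j := by
  set μ := 1 - lam with hμ
  have hμ0 : 0 ≤ μ := by simp [hμ]; linarith
  obtain ⟨k, hk⟩ : ∃ k, n = 2 * j + 2 + k := ⟨n - (2*j+2), by omega⟩
  have h1' : n - j = j + 1 + (k + 1) := by omega
  have h2' : n - (j + 1) = j + (k + 1) := by omega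
  rw [h1', h2']
  have key : 0 ≤ lam ^ j * μ ^ j * ((μ - lam) * (μ ^ (k+1) - lam ^ (k+1))) := by
    have hbase : 0 ≤ lam ^ j * μ ^ j := by positivity
    refine mul_nonneg hbase ?_
    rcases le_total lam μ with hle | hle
    · have := pow_le_pow_left₀ h0 hle (k+1)
      have h2 : 0 ≤ μ - lam := by linarith
      nlinarith
    · have := pow_le_pow_left₀ hμ0 hle (k+1)
      have h2 : μ - lam ≤ 0 := by linarith
      nlinarith
  have e : lam ^ j * μ ^ (j+1+(k+1)) + lam ^ (j+1+(k+1)) * μ ^ j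
      - (lam ^ (j+1) * μ ^ (j+(k+1)) + lam ^ (j+(k+1)) * μ ^ (j+1))
      = lam ^ j * μ ^ j * ((μ - lam) * (μ ^ (k+1) - lam ^ (k+1))) := by
    simp only [pow_add, pow_succ]
    ring
  linarith

theorem symm_bernstein_decreasing (n : ℕ) (lam : ℝ) (hlam : lam ∈ Set.Icc (0:ℝ) 1)
    (i j : ℕ) (hij : i ≤ j) (hj : (j : ℝ) ≤ n / 2) :
    lam ^ j * (1 - lam) ^ (n - j) + lam ^ (n - j) * (1 - lam) ^ j
      ≤ lam ^ i * (1 - lam) ^ (n - i) + lam ^ (n - i) * (1 - lam) ^ i := by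
  obtain ⟨h0, h1⟩ := hlam
  have h2j : 2 * j ≤ n := by
    have : (2 : ℝ) * j ≤ n := by linarith
    exact_mod_cast this
  clear hj
  induction j, hij using Nat.le_induction with
  | base => exact le_rfl
  | succ m hm ih =>
      have hmn : 2 * m ≤ n := by omega
      calc _ ≤ lam ^ m * (1 - lam) ^ (n - m) + lam ^ (n - m) * (1 - lam) ^ m :=
              symm_bernstein_step n lam h0 h1 m h2j
        _ ≤ _ := ih hmn
end
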